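/- The function M is twice differentiable on the interior of Θ, and its first two derivatives may be obtained by differentiating under the expectation: M'(θ) = E[ṁ_θ(Y₁,γ₁)] and M''(θ) = E[m̈_θ(Y₁,γ₁)], where ṁ_θ(y,γ) = γφ(y|θ)(y−θ)/((1−γ)φ(y|0) + γφ(y|θ)) and m̈_θ(y,γ) denote the first and second partial derivatives of θ ↦ m_θ(y,γ). -/

import Mathlib

/-
The θ-derivatives of `m_θ(y,γ)` are `ṁ = r (y − θ)` and `m̈ = r ((y − θ)² − 1) − r² (y − θ)²`,
where `r ∈ [0,1]` is the posterior weight of the `N(θ,1)` component, and `|m_θ|` is at most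
the sum of the two Gaussian log-densities in absolute value, because the mixture density lies
between its components. Hence `m_θ`, `ṁ_θ` and `m̈_θ` are dominated, locally uniformly in `θ`,
by quadratics in `y`, which are integrable whenever `Y` has a second moment, and dominated
differentiation under the integral sign applies twice.
-/

open MeasureTheory ProbabilityTheory Filter

/-- The `N(θ,1)` density `φ(y|θ)`. -/
noncomputable def npdf (y θ : ℝ) : ℝ :=
  Real.exp (-(y - θ) ^ 2 / 2) / Real.sqrt (2 * Real.pi)

/-- `m_θ(y,γ) = log((1−γ)φ(y|0) + γφ(y|θ))`. -/
noncomputable def mFun (θ : ℝ) (p : ℝ × ℝ) : ℝ :=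
  Real.log ((1 - p.2) * npdf p.1 0 + p.2 * npdf p.1 θ)

/-- The first partial derivative `ṁ_θ(y,γ) = γφ(y|θ)(y−θ)/((1−γ)φ(y|0) + γφ(y|θ))`. -/
noncomputable def mDot (θ : ℝ) (p : ℝ × ℝ) : ℝ :=
  p.2 * npdf p.1 θ * (p.1 - θ) / ((1 - p.2) * npdf p.1 0 + p.2 * npdf p.1 θ)

open Real Metric

noncomputable def mixDensity (θ : ℝ) (p : ℝ × ℝ) : ℝ :=
  (1 - p.2) * npdf p.1 0 + p.2 * npdf p.1 θ

/-- The second partial derivative `m̈_θ(y,γ)` of `θ ↦ m_θ(y,γ)`. -/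
noncomputable def mDDot (θ : ℝ) (p : ℝ × ℝ) : ℝ :=
  (p.2 * npdf p.1 θ * ((p.1 - θ) ^ 2 - 1) * mixDensity θ p
    - (p.2 * npdf p.1 θ * (p.1 - θ)) ^ 2) / mixDensity θ p ^ 2

lemma npdf_pos (y θ : ℝ) : 0 < npdf y θ := by unfold npdf; positivity

lemma log_npdf (y θ : ℝ) : log (npdf y θ) = -(y - θ) ^ 2 / 2 - log √(2 * π) := by
  unfold npdf
  rw [log_div (exp_ne_zero _) (by positivity), log_exp]

lemma hasDerivAt_npdf (y θ : ℝ) : HasDerivAt (npdf y) (npdf y θ * (y - θ)) θ := by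
  have hsub : HasDerivAt (fun t : ℝ => y - t) (-1) θ := (hasDerivAt_id θ).const_sub y
  have hexp : HasDerivAt (fun t : ℝ => -(y - t) ^ 2 / 2) (y - θ) θ :=
    ((hsub.pow 2).neg.div_const 2).congr_deriv (by ring)
  exact (hexp.exp.div_const √(2 * π)).congr_deriv (by unfold npdf; ring)

lemma abs_log_convex_comb_le {a b w : ℝ} (ha : 0 < a) (hb : 0 < b) (hw : w ∈ Set.Icc (0 : ℝ) 1) :
    |log ((1 - w) * a + w * b)| ≤ |log a| + |log b| := by
  obtain ⟨hw0, hw1⟩ := hw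
  set c := (1 - w) * a + w * b
  have between {u v : ℝ} (hu : 0 < u) (huc : u ≤ c) (hcv : c ≤ v) :
      |log c| ≤ |log u| + |log v| := by
    have h1 := log_le_log hu huc
    have h2 := log_le_log (hu.trans_le huc) hcv
    rw [abs_le]
    constructor <;> linarith [neg_abs_le (log u), le_abs_self (log v), abs_nonneg (log u),
      abs_nonneg (log v)]
  rcases le_total a b with h | h
  · exact between ha (by nlinarith) (by nlinarith)
  · rw [add_comm |log a|]
    exact between hb (by nlinarith) (by nlinarith)

noncomputable def postWeight (θ : ℝ) (p : ℝ × ℝ) : ℝ :=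
  p.2 * npdf p.1 θ / mixDensity θ p

lemma mDot_eq (θ : ℝ) (p : ℝ × ℝ) : mDot θ p = postWeight θ p * (p.1 - θ) := by
  unfold mDot postWeight mixDensity
  ring

lemma hasDerivAt_mixDensity (p : ℝ × ℝ) (θ : ℝ) :
    HasDerivAt (fun t => mixDensity t p) (p.2 * (npdf p.1 θ * (p.1 - θ))) θ :=
  ((hasDerivAt_npdf p.1 θ).const_mul p.2).const_add _

section Mixture

variable {p : ℝ × ℝ} (hp : p.2 ∈ Set.Icc (0 : ℝ) 1)
include hp

lemma mixDensity_pos (θ : ℝ) : 0 < mixDensity θ p :=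
  (lt_min (npdf_pos p.1 0) (npdf_pos p.1 θ)).trans_le
    (Convex.min_le_combo _ _ (sub_nonneg.2 hp.2) hp.1 (sub_add_cancel 1 p.2))

lemma postWeight_mem_Icc (θ : ℝ) : postWeight θ p ∈ Set.Icc (0 : ℝ) 1 := by
  have hD := mixDensity_pos hp θ
  refine ⟨div_nonneg (mul_nonneg hp.1 (npdf_pos p.1 θ).le) hD.le, (div_le_one hD).2 ?_⟩
  unfold mixDensity
  nlinarith [npdf_pos p.1 0, hp.2]

lemma mDDot_eq (θ : ℝ) :
    mDDot θ p = postWeight θ p * ((p.1 - θ) ^ 2 - 1) - (postWeight θ p * (p.1 - θ)) ^ 2 := by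
  have hD := (mixDensity_pos hp θ).ne'
  unfold mDDot postWeight
  field_simp

lemma hasDerivAt_mFun (θ : ℝ) : HasDerivAt (fun t => mFun t p) (mDot θ p) θ := by
  exact ((hasDerivAt_mixDensity p θ).log (mixDensity_pos hp θ).ne').congr_deriv (by unfold mDot mixDensity; ring)

lemma hasDerivAt_mDot (θ : ℝ) : HasDerivAt (fun t => mDot t p) (mDDot θ p) θ := by
  have hN : HasDerivAt (fun t => p.2 * npdf p.1 t * (p.1 - t))
      (p.2 * (npdf p.1 θ * (p.1 - θ)) * (p.1 - θ) + p.2 * npdf p.1 θ * (-1)) θ :=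
    ((hasDerivAt_npdf p.1 θ).const_mul p.2).mul ((hasDerivAt_id θ).const_sub p.1)
  exact (hN.div (hasDerivAt_mixDensity p θ) (mixDensity_pos hp θ).ne').congr_deriv (by unfold mDDot; ring)

lemma deriv_deriv_mFun (θ : ℝ) : deriv (deriv fun t => mFun t p) θ = mDDot θ p := by
  rw [funext fun t => (hasDerivAt_mFun hp t).deriv]
  exact (hasDerivAt_mDot hp θ).deriv

lemma abs_mFun_le (θ : ℝ) : |mFun θ p| ≤ |log (npdf p.1 0)| + |log (npdf p.1 θ)| :=
  abs_log_convex_comb_le (npdf_pos p.1 0) (npdf_pos p.1 θ) hp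

lemma abs_mDot_le (θ : ℝ) : |mDot θ p| ≤ |p.1 - θ| := by
  obtain ⟨hr0, hr1⟩ := postWeight_mem_Icc hp θ
  rw [mDot_eq, abs_mul, abs_of_nonneg hr0]
  exact mul_le_of_le_one_left (abs_nonneg _) hr1

lemma abs_mDDot_le (θ : ℝ) : |mDDot θ p| ≤ (p.1 - θ) ^ 2 + 1 := by
  obtain ⟨hr0, hr1⟩ := postWeight_mem_Icc hp θ
  have hs := sq_nonneg (p.1 - θ)
  rw [mDDot_eq hp, abs_le]
  constructor <;> nlinarith [mul_nonneg (mul_nonneg hr0 (sub_nonneg.2 hr1)) hs]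

end Mixture

lemma abs_sub_le_of_mem_ball {x θ : ℝ} (hx : x ∈ ball θ 1) (y : ℝ) : |y - x| ≤ |y - θ| + 1 := by
  rw [mem_ball, dist_comm, dist_eq] at hx
  linarith [abs_sub_le y θ x]

lemma sq_sub_le_of_mem_ball {x θ : ℝ} (hx : x ∈ ball θ 1) (y : ℝ) :
    (y - x) ^ 2 ≤ 2 * (y - θ) ^ 2 + 2 := by
  have h := abs_sub_le_of_mem_ball hx y
  nlinarith [sq_abs (y - x), sq_abs (y - θ), abs_nonneg (y - x), sq_nonneg (|y - θ| - 1)]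

lemma measurable_mFun (θ : ℝ) : Measurable (mFun θ) := by
  unfold mFun npdf
  fun_prop

lemma measurable_mDot (θ : ℝ) : Measurable (mDot θ) := by
  unfold mDot npdf
  fun_prop

lemma measurable_mDDot (θ : ℝ) : Measurable (mDDot θ) := by
  unfold mDDot mixDensity npdf
  fun_prop

section Integral

variable {μ : Measure (ℝ × ℝ)} [IsFiniteMeasure μ] (hY : MemLp Prod.fst 2 μ)
include hY

lemma integrable_sq_fst_sub (θ : ℝ) : Integrable (fun p : ℝ × ℝ => (p.1 - θ) ^ 2) μ :=
  (hY.sub (memLp_const θ)).integrable_sq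

lemma integrable_abs_fst_sub (θ : ℝ) : Integrable (fun p : ℝ × ℝ => |p.1 - θ|) μ :=
  ((hY.sub (memLp_const θ)).integrable one_le_two).abs

lemma integrable_log_npdf (θ : ℝ) : Integrable (fun p : ℝ × ℝ => log (npdf p.1 θ)) μ := by
  simp_rw [log_npdf]
  exact ((integrable_sq_fst_sub hY θ).neg.div_const 2).sub (integrable_const _)

variable (hγ : ∀ᵐ p ∂μ, p.2 ∈ Set.Icc (0 : ℝ) 1)
include hγ

lemma integrable_mFun (θ : ℝ) : Integrable (mFun θ) μ :=
  ((integrable_log_npdf hY 0).abs.add (integrable_log_npdf hY θ).abs).mono'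
    (measurable_mFun θ).aestronglyMeasurable (hγ.mono fun _ hp => abs_mFun_le hp θ)

lemma integrable_mDot (θ : ℝ) : Integrable (mDot θ) μ :=
  (integrable_abs_fst_sub hY θ).mono' (measurable_mDot θ).aestronglyMeasurable
    (hγ.mono fun _ hp => abs_mDot_le hp θ)

theorem hasDerivAt_integral_mFun (θ : ℝ) :
    HasDerivAt (fun t => ∫ p, mFun t p ∂μ) (∫ p, mDot θ p ∂μ) θ :=
  (hasDerivAt_integral_of_dominated_loc_of_deriv_le (bound := fun p => |p.1 - θ| + 1)
    (ball_mem_nhds θ one_pos) (.of_forall fun t => (measurable_mFun t).aestronglyMeasurable)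
    (integrable_mFun hY hγ θ) (measurable_mDot θ).aestronglyMeasurable
    (hγ.mono fun p hp t ht => (abs_mDot_le hp t).trans (abs_sub_le_of_mem_ball ht p.1))
    ((integrable_abs_fst_sub hY θ).add (integrable_const 1))
    (hγ.mono fun _ hp t _ => hasDerivAt_mFun hp t)).2

theorem hasDerivAt_integral_mDot (θ : ℝ) :
    HasDerivAt (fun t => ∫ p, mDot t p ∂μ) (∫ p, mDDot θ p ∂μ) θ :=
  (hasDerivAt_integral_of_dominated_loc_of_deriv_le (bound := fun p => 2 * (p.1 - θ) ^ 2 + 3)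
    (ball_mem_nhds θ one_pos) (.of_forall fun t => (measurable_mDot t).aestronglyMeasurable)
    (integrable_mDot hY hγ θ) (measurable_mDDot θ).aestronglyMeasurable
    (hγ.mono fun p hp t ht => by
      linarith [abs_mDDot_le hp t, sq_sub_le_of_mem_ball ht p.1, Real.norm_eq_abs (mDDot t p)])
    (((integrable_sq_fst_sub hY θ).const_mul 2).add (integrable_const 3))
    (hγ.mono fun _ hp t _ => hasDerivAt_mDot hp t)).2

end Integral

theorem stmt12_general (G : Measure ℝ) [IsProbabilityMeasure G]
    (hG : ∀ᵐ x ∂G, x ∈ Set.Icc (0 : ℝ) 1)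
    (K : ℝ)
    (M : ℝ → ℝ) (hM : ∀ θ, M θ = ∫ p, mFun θ p ∂((gaussianReal 0 1).prod G)) :
    ∀ θ ∈ Set.Ioo (-K) K,
      HasDerivAt M (∫ p, mDot θ p ∂((gaussianReal 0 1).prod G)) θ ∧
        HasDerivAt (fun t => ∫ p, mDot t p ∂((gaussianReal 0 1).prod G))
          (∫ p, deriv (deriv fun s => mFun s p) θ ∂((gaussianReal 0 1).prod G)) θ := by
  have hY : MemLp Prod.fst 2 ((gaussianReal 0 1).prod G) :=
    (memLp_id_gaussianReal 2).comp_measurePreserving measurePreserving_fst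
  have hγ : ∀ᵐ p ∂((gaussianReal 0 1).prod G), p.2 ∈ Set.Icc (0 : ℝ) 1 :=
    measurePreserving_snd.quasiMeasurePreserving.ae hG
  intro θ _
  rw [funext hM, integral_congr_ae (hγ.mono fun p hp => deriv_deriv_mFun hp θ)]
  exact ⟨hasDerivAt_integral_mFun hY hγ θ, hasDerivAt_integral_mDot hY hγ θ⟩

/-- Under the null model, `M(θ) = E[m_θ(Y₁,γ₁)]` is twice differentiable on the interior
of `Θ = [−K,K]`, and its first two derivatives are obtained by differentiating under the
expectation: `M'(θ) = E[ṁ_θ(Y₁,γ₁)]` and `M''(θ) = E[m̈_θ(Y₁,γ₁)]`, where `m̈_θ` is the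
second partial derivative of `θ ↦ m_θ(y,γ)`. -/
theorem stmt12 (G : Measure ℝ) [IsProbabilityMeasure G]
    (hG : ∀ᵐ x ∂G, x ∈ Set.Icc (0 : ℝ) 1)
    (hVar : 0 < (∫ x, x ^ 2 ∂G) - (∫ x, x ∂G) ^ 2)
    (hlog : Integrable (fun x => -Real.log (1 - x)) G)
    (K : ℝ) (hK : 0 < K)
    (M : ℝ → ℝ) (hM : ∀ θ, M θ = ∫ p, mFun θ p ∂((gaussianReal 0 1).prod G)) :
    ∀ θ ∈ Set.Ioo (-K) K,
      HasDerivAt M (∫ p, mDot θ p ∂((gaussianReal 0 1).prod G)) θ ∧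
        HasDerivAt (fun t => ∫ p, mDot t p ∂((gaussianReal 0 1).prod G))
          (∫ p, deriv (deriv fun s => mFun s p) θ ∂((gaussianReal 0 1).prod G)) θ :=
  stmt12_general G hG K M hM
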